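/- arXiv:2002.09622 — 2 statements merged into one kernel-verified Lean document; each statement's English description precedes it below -/
import Mathlib

section
/- On monotone neighborhood models with intersection-style public announcement semantics, the reduction axiom for W is valid: [ψ]Wφ ↔ (ψ → W[ψ]φ). -/
structure NModel (S : Type) where
  N : S → Set (Set S)
  V : ℕ → Set S

/-- The intersection submodel `M^∩X`, with carrier `X`,
`N^∩X(s) = {P ∩ X | P ∈ N(s)}` and `V^X(p) = V(p) ∩ X`. -/
def restrict {S : Type} (M : NModel S) (X : Set S) : NModel X where
  N := fun s => {Q | ∃ P ∈ M.N s.val, Q = {x : X | x.val ∈ P}}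
  V := fun p => {x : X | x.val ∈ M.V p}

/-- The language L(W) with public announcements. -/
inductive Form : Type where
  | atom : ℕ → Form
  | neg : Form → Form
  | and : Form → Form → Form
  | w : Form → Form
  | ann : Form → Form → Form

/-- Intersection semantics for public announcements. -/
def sat : {S : Type} → NModel S → S → Form → Prop
  | _, M, s, .atom p => s ∈ M.V p
  | _, M, s, .neg φ => ¬ sat M s φ
  | _, M, s, .and φ ψ => sat M s φ ∧ sat M s ψ
  | _, M, s, .w φ => {x | sat M x φ} ∈ M.N s ∧ ¬ sat M s φ
  | _, M, s, .ann ψ φ => ∀ h : sat M s ψ, sat (restrict M {x | sat M x ψ}) ⟨s, h⟩ φ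

def monotone' {S : Type} (M : NModel S) : Prop :=
  ∀ s (X Y : Set S), X ∈ M.N s → X ⊆ Y → Y ∈ M.N s

/-- Under monotonicity, a neighbourhood `Q` of the submodel is generated by the largest set whose
trace on `X` is `Q`, namely `Q` together with everything outside `X`. -/
theorem mem_restrict_N_iff {S : Type} {M : NModel S} (hm : monotone' M) {X : Set S} (s : X)
    (Q : Set X) : Q ∈ (restrict M X).N s ↔ {x | ∀ h : x ∈ X, (⟨x, h⟩ : X) ∈ Q} ∈ M.N s := by
  constructor
  · rintro ⟨P, hP, rfl⟩
    exact hm s P _ hP fun x hx _ => hx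
  · intro hQ
    exact ⟨_, hQ, by ext x; exact ⟨fun hx _ => hx, fun hx => hx x.prop⟩⟩

/-- The reduction axiom `[ψ]Wφ ↔ (ψ → W[ψ]φ)` is valid on monotone neighborhood models. -/
theorem reduction_axiom_AW {S : Type} (M : NModel S) (hm : monotone' M)
    (ψ φ : Form) (s : S) :
    sat M s (.ann ψ (.w φ)) ↔ (sat M s ψ → sat M s (.w (.ann ψ φ))) := by
  simp only [sat]
  -- `⟦[ψ]φ⟧` is the truth set of `φ` in the submodel together with `⟦¬ψ⟧`.
  exact forall_congr' fun hψ =>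
    and_congr (mem_restrict_N_iff hm _ _) (not_congr ⟨fun h _ => h, fun h => h hψ⟩)
end

section
/- On monotone neighborhood models with intersection semantics for public announcements, the formula [Wp]Wp is valid: a false belief about a fact survives its own announcement. Equivalently, Wp → W(Wp → p) is valid on monotone neighborhood models. -/
/-- `φ → χ` defined from `¬` and `∧`. -/
def Form.imp (φ χ : Form) : Form := .neg (.and φ (.neg χ))

theorem sat_imp_iff {S : Type} {M : NModel S} {s : S} {φ χ : Form} :
    sat M s (φ.imp χ) ↔ (sat M s φ → sat M s χ) := by
  simp only [Form.imp, sat, not_and, not_not]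

theorem sat_w_atom_restrict {S : Type} {M : NModel S} {X : Set S} {s : S} {p : ℕ}
    (h : sat M s (.w (.atom p))) (hs : s ∈ X) :
    sat (restrict M X) ⟨s, hs⟩ (.w (.atom p)) :=
  ⟨⟨M.V p, h.1, rfl⟩, h.2⟩

theorem sat_w_of_imp {S : Type} {M : NModel S} (hm : monotone' M) {s : S} {φ χ : Form}
    (hφ : sat M s (.w φ)) (himp : ∀ x, sat M x φ → sat M x χ) (hχ : ¬ sat M s χ) :
    sat M s (.w χ) :=
  ⟨hm s _ _ hφ.1 himp, hχ⟩

/-- `[Wp]Wp` is valid on monotone neighborhood models: a false belief about a fact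
survives its own announcement. Equivalently, `Wp → W(Wp → p)` is valid on them. -/
theorem announced_false_belief_survives {S : Type} (M : NModel S) (hm : monotone' M) (p : ℕ) :
    (∀ s : S, sat M s (.ann (.w (.atom p)) (.w (.atom p)))) ∧
    (∀ s : S, sat M s (Form.imp (.w (.atom p)) (.w (Form.imp (.w (.atom p)) (.atom p))))) := by
  refine ⟨fun s h => sat_w_atom_restrict h h, fun s => sat_imp_iff.2 fun h => ?_⟩
  -- `⟦p⟧ ⊆ ⟦Wp → p⟧`, and `Wp → p` fails at `s` because `Wp` holds there while `p` does not.
  exact sat_w_of_imp hm h (fun x hx => sat_imp_iff.2 fun _ => hx)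
    fun himp => h.2 (sat_imp_iff.1 himp h)
end
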